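/- arXiv:2104.09353 — 2 statements merged into one kernel-verified Lean document; each statement's English description precedes it below -/
import Mathlib

section
/- Let μ be a finitely additive measure on Ω, z ∉ {−1,0,1}, f = P_z(μ), and let x_0, x_1, …, x_k be a chain pointing away from o with d(o,x_0) = m. Then f(x_k)/z^{m+k} = f(x_0)/z^{m+2k} + ((z²−1)/z²) Σ_{j=1}^{k} z^{2(j−k)} μ(Ω(x_j)), where Ω(x) is the set of ends ω with x ∈ [o,ω[. -/
open SimpleGraph

variable {V : Type*}

/-- The type of directed edges of a graph. -/
def DEdge (G : SimpleGraph V) : Type _ := {p : V × V // G.Adj p.1 p.2}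

/-- Initial vertex of a directed edge. -/
def DEdge.ini {G : SimpleGraph V} (e : DEdge G) : V := e.1.1

/-- Terminal vertex of a directed edge. -/
def DEdge.ter {G : SimpleGraph V} (e : DEdge G) : V := e.1.2

/-- Orientation reversal of a directed edge. -/
def DEdge.op {G : SimpleGraph V} (e : DEdge G) : DEdge G := ⟨(e.1.2, e.1.1), e.2.symm⟩

/-- The sum of an edge function over all directed edges with initial vertex `x`. -/
noncomputable def edgeSum (G : SimpleGraph V) (x : V) (F : DEdge G → ℂ) : ℂ :=
  ∑ᶠ (e : DEdge G) (_ : e.ini = x), F e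

/-- The space `L(E⃗)`: edge functions `F` with
`F(e⃗) + F(e⃗^op) = z = Σ_{ι(e⃗')=x} F(e⃗')` for some common `z`. -/
def memL (G : SimpleGraph V) (F : DEdge G → ℂ) : Prop :=
  ∃ z : ℂ, (∀ e : DEdge G, F e + F e.op = z) ∧ (∀ x : V, edgeSum G x F = z)

/-- A directed edge points away from the base point `o`. -/
def PointsAway (G : SimpleGraph V) (o : V) (e : DEdge G) : Prop :=
  G.dist o e.ter = G.dist o e.ini + 1

/-- The directed edges pointing away from `o`. -/
def DEdgeAway (G : SimpleGraph V) (o : V) : Type _ := {e : DEdge G // PointsAway G o e}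

/-- Sum of a function on away-pointing edges over the edges with initial vertex `x`. -/
noncomputable def edgeSumAway (G : SimpleGraph V) (o : V) (x : V)
    (F : DEdgeAway G o → ℂ) : ℂ :=
  ∑ᶠ (e : DEdgeAway G o) (_ : e.1.ini = x), F e

/-- The space `L(E⃗_o)`: functions on away-pointing edges with
`F(e⃗) = Σ_{ι(e⃗')=τ(e⃗)} F(e⃗')`. -/
def memLAway (G : SimpleGraph V) (o : V) (F : DEdgeAway G o → ℂ) : Prop :=
  ∀ e : DEdgeAway G o, F e = edgeSumAway G o e.1.ter F

/-- The boundary `Ω` of the tree, realized as the set of geodesic rays based at `o`. -/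
def Ray (G : SimpleGraph V) (o : V) : Type _ :=
  {r : ℕ → V // r 0 = o ∧ (∀ n, G.Adj (r n) (r (n + 1))) ∧ ∀ n, G.dist o (r n) = n}

/-- `Ω_o(v)`: the ends whose ray from `o` passes through `v`. -/
def raysThrough (G : SimpleGraph V) (o v : V) : Set (Ray G o) :=
  {ω | ∃ n, ω.1 n = v}

/-- The natural (compact, totally disconnected) topology on the boundary,
generated by the sets `Ω_o(v)`. -/
instance rayTopology (G : SimpleGraph V) (o : V) : TopologicalSpace (Ray G o) :=
  TopologicalSpace.generateFrom {S | ∃ v : V, S = raysThrough G o v}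

/-- `∂₊ e⃗`: the set of ends reachable through the directed edge `e⃗`. -/
def dplus (G : SimpleGraph V) (o : V) (e : DEdge G) : Set (Ray G o) :=
  {ω | ∃ N, ∀ n ≥ N, G.dist e.ter (ω.1 n) + 1 = G.dist e.ini (ω.1 n)}

/-- A finitely additive measure on the clopen subsets of a space. -/
def IsFAMeasure {Z : Type*} [TopologicalSpace Z] (μ : Set Z → ℂ) : Prop :=
  μ ∅ = 0 ∧ ∀ U U' : Set Z, IsClopen U → IsClopen U' →
    μ (U ∪ U') + μ (U ∩ U') = μ U + μ U'

/-- The tree Laplacian: the average of `f` over the neighbors of `x`. -/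
noncomputable def lap (G : SimpleGraph V) [G.LocallyFinite] (f : V → ℂ) (x : V) : ℂ :=
  (G.degree x : ℂ)⁻¹ * ∑ y ∈ G.neighborFinset x, f y

/-- The horocycle bracket `⟨·,·⟩ : X × Ω → ℤ` for base point `o`: the eventual
value of `n - d(x, ω_n)` along the ray `ω`. -/
def IsHorocycleBracket (G : SimpleGraph V) (o : V) (brk : V → Ray G o → ℤ) : Prop :=
  ∀ (x : V) (ω : Ray G o), ∃ N : ℕ, ∀ n : ℕ, n ≥ N → brk x ω = (n : ℤ) - (G.dist x (ω.1 n) : ℤ)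

/-- The Poisson transform `P_z(μ)(x) = ∫_Ω z^{⟨x,ω⟩} dμ(ω)`, i.e. the pairing of
`μ` with the locally constant function `ω ↦ z^{⟨x,ω⟩}`. -/
noncomputable def poisson (G : SimpleGraph V) (o : V) (brk : V → Ray G o → ℤ)
    (z : ℂ) (μ : Set (Ray G o) → ℂ) (x : V) : ℂ :=
  ∑ᶠ c : ℂ, c * μ {ω : Ray G o | z ^ brk x ω = c}

/-!
Along an edge `x → y` pointing away from `o`, the bracket satisfies `⟨y,ω⟩ = ⟨x,ω⟩ + 1 = |y|`
on `Ω(y)` and `⟨y,ω⟩ = ⟨x,ω⟩ - 1` off `Ω(y)`. Splitting the Poisson integral over `Ω(y)` and its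
complement gives `f(y) = z⁻¹ f(x) + (z - z⁻¹) z^|x| μ(Ω(y))`, and unrolling this first-order
recurrence along the chain gives the formula. The tree enters through `n ↦ d(x, ω_n)`: it grows
by one at every step `n ≥ |x|` because a ray never backtracks, and it stays one less than
`d(y, ω_n)` unless the ray passes through `y`.
-/

section FiniteAdditivity

variable {Z : Type*} {μ : Set Z → ℂ}

theorem IsFAMeasure.inter_add_inter_compl [TopologicalSpace Z] (hμ : IsFAMeasure μ)
    {A U : Set Z} (hA : IsClopen A) (hU : IsClopen U) : μ (A ∩ U) + μ (A ∩ Uᶜ) = μ A := by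
  have h := hμ.2 _ _ (hA.inter hU) (hA.inter hU.compl)
  have hdisj : (A ∩ U) ∩ (A ∩ Uᶜ) = ∅ := by
    rw [Set.inter_inter_inter_comm, Set.inter_compl_self, Set.inter_empty]
  rwa [Set.inter_union_compl, hdisj, hμ.1, add_zero, eq_comm] at h

/-- `∫_U g dμ` for a function `g` with finitely many values, each taken on a clopen set. -/
noncomputable def faSetIntegral (μ : Set Z → ℂ) (g : Z → ℂ) (U : Set Z) : ℂ :=
  ∑ᶠ c : ℂ, c * μ ({ω | g ω = c} ∩ U)

theorem faSetIntegral_add_compl [TopologicalSpace Z] (hμ : IsFAMeasure μ) {g : Z → ℂ}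
    (hg : (Set.range g).Finite) (hfib : ∀ c, IsClopen {ω | g ω = c}) {U : Set Z} (hU : IsClopen U) :
    faSetIntegral μ g U + faSetIntegral μ g Uᶜ = ∑ᶠ c : ℂ, c * μ {ω | g ω = c} := by
  have hsupp (W : Set Z) : (Function.support fun c => c * μ ({ω | g ω = c} ∩ W)).Finite := by
    refine hg.subset fun c hc => ?_
    by_contra hnot
    have : {ω | g ω = c} = ∅ := Set.eq_empty_of_forall_notMem fun ω hω => hnot ⟨ω, hω⟩
    simp [this, hμ.1] at hc
  rw [faSetIntegral, faSetIntegral, ← finsum_add_distrib (hsupp U) (hsupp Uᶜ)]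
  exact finsum_congr fun c => by rw [← mul_add, hμ.inter_add_inter_compl (hfib c) hU]

theorem faSetIntegral_eq_mul (hμ : μ ∅ = 0) {g : Z → ℂ} {U : Set Z} {a : ℂ}
    (h : ∀ ω ∈ U, g ω = a) : faSetIntegral μ g U = a * μ U := by
  rw [faSetIntegral, finsum_eq_single _ a]
  · congr 2
    exact Set.inter_eq_right.mpr h
  · intro c hc
    have : {ω | g ω = c} ∩ U = ∅ :=
      Set.eq_empty_of_forall_notMem fun ω ⟨hωc, hωU⟩ => hc (hωc ▸ h ω hωU)
    rw [this, hμ, mul_zero]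

theorem faSetIntegral_eq_mul_of_eqOn {g g' : Z → ℂ} {U : Set Z} {r : ℂ} (hr : r ≠ 0)
    (h : ∀ ω ∈ U, g' ω = r * g ω) : faSetIntegral μ g' U = r * faSetIntegral μ g U := by
  have hfib (c : ℂ) : {ω | g' ω = r * c} ∩ U = {ω | g ω = c} ∩ U := by
    ext ω
    simp only [Set.mem_inter_iff, Set.mem_ofPred_eq]
    exact ⟨fun ⟨hc, hω⟩ => ⟨mul_left_cancel₀ hr ((h ω hω).symm.trans hc), hω⟩,
      fun ⟨hc, hω⟩ => ⟨hc ▸ h ω hω, hω⟩⟩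
  rw [faSetIntegral, faSetIntegral, mul_finsum, ← finsum_comp_equiv (Equiv.mulLeft₀ r hr)]
  refine finsum_congr fun c => ?_
  change r * c * μ ({ω | g' ω = r * c} ∩ U) = _
  rw [hfib, mul_assoc]

end FiniteAdditivity

namespace SimpleGraph

theorem Reachable.exists_adj_dist_add_one {G : SimpleGraph V} {t w : V} (h : G.Reachable t w)
    (hne : w ≠ t) : ∃ s, G.Adj w s ∧ G.dist t s + 1 = G.dist t w := by
  obtain ⟨p, hp⟩ := h.symm.exists_walk_length_eq_dist
  have hnil : ¬ p.Nil := fun hnil => hne hnil.eq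
  have hadj := p.adj_snd hnil
  refine ⟨p.snd, hadj, le_antisymm ?_ ?_⟩
  · rw [dist_comm, dist_comm (u := t), ← hp, ← p.length_tail_add_one hnil]
    exact Nat.add_le_add_right (dist_le p.tail) 1
  · have := hadj.symm.reachable.dist_triangle_right t
    rw [dist_eq_one_iff_adj.mpr hadj.symm] at this
    exact this

namespace IsTree

variable {G : SimpleGraph V}

theorem eq_of_adj_of_dist_add_one (hG : G.IsTree) {t w a b : V} (ha : G.Adj w a)
    (hb : G.Adj w b) (hat : G.dist t a + 1 = G.dist t w) (hbt : G.dist t b + 1 = G.dist t w) :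
    a = b := by
  have geodesic_through : ∀ s, G.Adj w s → G.dist t s + 1 = G.dist t w →
      ∃ p : G.Walk w t, p.IsPath ∧ p.snd = s := by
    intro s hs hst
    obtain ⟨q, hq⟩ := (hG.connected s t).exists_walk_length_eq_dist
    refine ⟨.cons hs q, Walk.isPath_of_length_eq_dist _ ?_, Walk.snd_cons q hs⟩
    rw [Walk.length_cons, hq, dist_comm, hst, dist_comm]
  obtain ⟨p, hp, rfl⟩ := geodesic_through a ha hat
  obtain ⟨q, hq, rfl⟩ := geodesic_through b hb hbt
  rw [Subtype.mk.inj ((hG.isAcyclic.subsingleton_path w t).elim ⟨p, hp⟩ ⟨q, hq⟩)]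

theorem eq_of_adj_of_dist_cross (hG : G.IsTree) {x y a b : V} (hxy : G.Adj x y)
    (hab : G.Adj a b) (ha : G.dist y a = G.dist x a + 1) (hb : G.dist x b = G.dist y b + 1) :
    b = y := by
  -- if `a ≠ x`, its neighbour towards `x` is also its neighbour towards `y`, hence is `b`
  by_cases hax : a = x
  · subst hax
    have : G.dist a b = 1 := dist_eq_one_iff_adj.mpr hab
    exact (hG.connected.dist_eq_zero_iff.mp (by omega)).symm
  obtain ⟨s, has, hsx⟩ := (hG.connected x a).exists_adj_dist_add_one hax
  have hsy : G.dist y s + 1 = G.dist y a := by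
    have := hxy.symm.reachable.dist_triangle_left s
    rw [dist_eq_one_iff_adj.mpr hxy.symm] at this
    rcases hG.dist_eq_dist_add_one_of_adj y has with h | h <;> omega
  have hby : G.dist y b + 1 = G.dist y a := by
    rcases hG.dist_eq_dist_add_one_of_adj x hab with h | h <;>
    rcases hG.dist_eq_dist_add_one_of_adj y hab with h' | h' <;> omega
  have := hG.eq_of_adj_of_dist_add_one has hab hsy hby
  subst this
  omega

end IsTree

end SimpleGraph

namespace Ray

variable {G : SimpleGraph V} {o : V}

theorem dist_apply (ω : Ray G o) (n : ℕ) : G.dist o (ω.1 n) = n := ω.2.2.2 n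

theorem adj_apply_succ (ω : Ray G o) (n : ℕ) : G.Adj (ω.1 n) (ω.1 (n + 1)) := ω.2.2.1 n

theorem apply_zero (ω : Ray G o) : ω.1 0 = o := ω.2.1

theorem mem_raysThrough_iff {ω : Ray G o} {v : V} :
    ω ∈ raysThrough G o v ↔ ω.1 (G.dist o v) = v := by
  refine ⟨fun ⟨n, hn⟩ => ?_, fun h => ⟨_, h⟩⟩
  rw [← hn, dist_apply]

theorem dist_succ_succ_of_dist_succ (hG : G.IsTree) (ω : Ray G o) (x : V) {n : ℕ}
    (h : G.dist x (ω.1 (n + 1)) = G.dist x (ω.1 n) + 1) :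
    G.dist x (ω.1 (n + 2)) = G.dist x (ω.1 (n + 1)) + 1 := by
  refine (hG.dist_eq_dist_add_one_of_adj x (ω.adj_apply_succ (n + 1))).resolve_left fun h' => ?_
  -- otherwise `ω n` and `ω (n + 2)` are two neighbours of `ω (n + 1)` closer to `x`
  have := hG.eq_of_adj_of_dist_add_one (ω.adj_apply_succ n).symm (ω.adj_apply_succ (n + 1))
    (by omega) h'.symm
  have h₁ := ω.dist_apply n
  rw [this, dist_apply] at h₁
  omega

theorem dist_succ_of_dist_succ_of_le (hG : G.IsTree) (ω : Ray G o) (x : V) {i n : ℕ}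
    (h : G.dist x (ω.1 (i + 1)) = G.dist x (ω.1 i) + 1) (hin : i ≤ n) :
    G.dist x (ω.1 (n + 1)) = G.dist x (ω.1 n) + 1 := by
  induction n, hin using Nat.le_induction with
  | base => exact h
  | succ n _ ih => exact ω.dist_succ_succ_of_dist_succ hG x ih

theorem dist_succ_of_le (hG : G.IsTree) (ω : Ray G o) {x : V} {n : ℕ} (hn : G.dist o x ≤ n) :
    G.dist x (ω.1 (n + 1)) = G.dist x (ω.1 n) + 1 := by
  by_contra hinc
  have hdec : ∀ i ≤ n, G.dist x (ω.1 (i + 1)) + 1 = G.dist x (ω.1 i) := fun i hi =>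
    ((hG.dist_eq_dist_add_one_of_adj x (ω.adj_apply_succ i)).resolve_right
      fun h => hinc (ω.dist_succ_of_dist_succ_of_le hG x h hi)).symm
  have hdesc : ∀ i ≤ n + 1, G.dist x (ω.1 i) + i = G.dist o x := by
    intro i hi
    induction i with
    | zero => rw [apply_zero, dist_comm, add_zero]
    | succ i ih =>
      have h₁ := hdec i (by omega)
      have h₂ := ih (by omega)
      omega
  have := hdesc (n + 1) le_rfl
  omega

theorem dist_add_of_le (hG : G.IsTree) (ω : Ray G o) {x : V} {n : ℕ} (hn : G.dist o x ≤ n)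
    (k : ℕ) : G.dist x (ω.1 (n + k)) = G.dist x (ω.1 n) + k := by
  induction k with
  | zero => rfl
  | succ k ih => rw [← add_assoc, ω.dist_succ_of_le hG (by omega), ih, add_assoc]

theorem dist_eq_dist_add_one_of_notMem (hG : G.IsTree) (ω : Ray G o) {x y : V}
    (hxy : G.Adj x y) (hd : G.dist o y = G.dist o x + 1) (hω : ω ∉ raysThrough G o y) (n : ℕ) :
    G.dist y (ω.1 n) = G.dist x (ω.1 n) + 1 := by
  induction n with
  | zero => rwa [apply_zero, G.dist_comm, G.dist_comm (u := x)]
  | succ n ih =>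
    have hcomm (v : V) : G.dist (ω.1 (n + 1)) v = G.dist v (ω.1 (n + 1)) := G.dist_comm
    rcases hG.dist_eq_dist_add_one_of_adj (ω.1 (n + 1)) hxy with h | h <;> rw [hcomm, hcomm] at h
    · exact absurd ⟨n + 1, hG.eq_of_adj_of_dist_cross hxy (ω.adj_apply_succ n) ih h⟩ hω
    · exact h

theorem isOpen_setOf_apply_eq (n : ℕ) (w : V) : IsOpen {ω : Ray G o | ω.1 n = w} := by
  have : {ω : Ray G o | ω.1 n = w} = ⋃ (_ : G.dist o w = n), raysThrough G o w := by
    ext ω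
    simp only [Set.mem_ofPred_eq, Set.mem_iUnion, mem_raysThrough_iff, exists_prop]
    constructor
    · rintro rfl
      rw [dist_apply]
      exact ⟨rfl, rfl⟩
    · rintro ⟨rfl, h⟩
      exact h
  rw [this]
  exact isOpen_iUnion fun _ => TopologicalSpace.isOpen_generateFrom_of_mem ⟨w, rfl⟩

theorem isClopen_setOf_apply (n : ℕ) (p : V → Prop) : IsClopen {ω : Ray G o | p (ω.1 n)} := by
  let _ : TopologicalSpace V := ⊥
  have : DiscreteTopology V := ⟨rfl⟩
  exact (isClopen_discrete {w | p w}).preimage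
    (continuous_discrete_rng.mpr fun w => isOpen_setOf_apply_eq n w)

theorem isClopen_raysThrough (v : V) : IsClopen (raysThrough G o v) := by
  have : raysThrough G o v = {ω | ω.1 (G.dist o v) = v} := Set.ext fun _ => mem_raysThrough_iff
  exact this ▸ isClopen_setOf_apply _ (· = v)

end Ray

namespace IsHorocycleBracket

variable {G : SimpleGraph V} {o : V} {brk : V → Ray G o → ℤ}

theorem eq_sub_dist (hbrk : IsHorocycleBracket G o brk) (hG : G.IsTree) (x : V) (ω : Ray G o)
    {n : ℕ} (hn : G.dist o x ≤ n) : brk x ω = n - G.dist x (ω.1 n) := by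
  obtain ⟨N, hN⟩ := hbrk x ω
  rw [hN (n + N) (by omega), ω.dist_add_of_le hG hn N]
  push_cast
  ring

theorem mem_Icc (hbrk : IsHorocycleBracket G o brk) (hG : G.IsTree) (x : V) (ω : Ray G o) :
    brk x ω ∈ Set.Icc (-(G.dist o x : ℤ)) (G.dist o x) := by
  have h := hbrk.eq_sub_dist hG x ω le_rfl
  have htri : G.dist x (ω.1 (G.dist o x)) ≤ G.dist x o + G.dist o (ω.1 (G.dist o x)) :=
    hG.connected.dist_triangle
  rw [ω.dist_apply, G.dist_comm (u := x) (v := o)] at htri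
  constructor <;> omega

theorem isClopen_setOf (hbrk : IsHorocycleBracket G o brk) (hG : G.IsTree) (x : V)
    (p : ℤ → Prop) : IsClopen {ω | p (brk x ω)} := by
  have : {ω | p (brk x ω)} = {ω : Ray G o | p (G.dist o x - G.dist x (ω.1 (G.dist o x)))} := by
    ext ω
    rw [Set.mem_ofPred_eq, Set.mem_ofPred_eq, hbrk.eq_sub_dist hG x ω le_rfl]
  exact this ▸ Ray.isClopen_setOf_apply _ fun w => p (G.dist o x - G.dist x w)

theorem finite_range_zpow (hbrk : IsHorocycleBracket G o brk) (hG : G.IsTree) (x : V) (z : ℂ) :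
    (Set.range fun ω => z ^ brk x ω).Finite :=
  ((Set.finite_Icc _ _).image (z ^ ·)).subset <|
    Set.range_subset_iff.mpr fun ω => ⟨_, hbrk.mem_Icc hG x ω, rfl⟩

theorem eq_of_mem_raysThrough (hbrk : IsHorocycleBracket G o brk) (hG : G.IsTree) {x y : V}
    {ω : Ray G o} (hω : ω ∈ raysThrough G o y) (hxy : G.dist o x ≤ G.dist o y) :
    brk x ω = G.dist o y - G.dist x y := by
  rw [hbrk.eq_sub_dist hG x ω hxy, Ray.mem_raysThrough_iff.mp hω]

theorem eq_sub_one_of_notMem (hbrk : IsHorocycleBracket G o brk) (hG : G.IsTree) {x y : V}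
    (hxy : G.Adj x y) (hd : G.dist o y = G.dist o x + 1) {ω : Ray G o}
    (hω : ω ∉ raysThrough G o y) : brk y ω = brk x ω - 1 := by
  rw [hbrk.eq_sub_dist hG y ω le_rfl, hbrk.eq_sub_dist hG x ω (n := G.dist o y) (by omega),
    ω.dist_eq_dist_add_one_of_notMem hG hxy hd hω]
  push_cast
  ring

end IsHorocycleBracket

theorem poisson_of_adj {G : SimpleGraph V} {o : V} {brk : V → Ray G o → ℤ} {z : ℂ}
    {μ : Set (Ray G o) → ℂ} (hG : G.IsTree) (hbrk : IsHorocycleBracket G o brk)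
    (hμ : IsFAMeasure μ) (hz : z ≠ 0) {x y : V} (hxy : G.Adj x y)
    (hd : G.dist o y = G.dist o x + 1) :
    poisson G o brk z μ y
      = z⁻¹ * poisson G o brk z μ x + (z - z⁻¹) * z ^ G.dist o x * μ (raysThrough G o y) := by
  set U := raysThrough G o y
  have hsplit (v : V) : faSetIntegral μ (fun ω => z ^ brk v ω) U
      + faSetIntegral μ (fun ω => z ^ brk v ω) Uᶜ = poisson G o brk z μ v :=
    faSetIntegral_add_compl hμ (hbrk.finite_range_zpow hG v z)
      (fun c => hbrk.isClopen_setOf hG v (z ^ · = c)) (Ray.isClopen_raysThrough y)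
  have hy_on : faSetIntegral μ (fun ω => z ^ brk y ω) U = z ^ (G.dist o x + 1) * μ U :=
    faSetIntegral_eq_mul hμ.1 fun ω hω => by
      rw [hbrk.eq_of_mem_raysThrough hG hω le_rfl, dist_self, hd, Nat.cast_zero, sub_zero,
        zpow_natCast]
  have hx_on : faSetIntegral μ (fun ω => z ^ brk x ω) U = z ^ G.dist o x * μ U :=
    faSetIntegral_eq_mul hμ.1 fun ω hω => by
      rw [hbrk.eq_of_mem_raysThrough hG hω (by omega), dist_eq_one_iff_adj.mpr hxy, hd,
        Nat.cast_succ, Nat.cast_one, add_sub_cancel_right, zpow_natCast]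
  have hy_off : faSetIntegral μ (fun ω => z ^ brk y ω) Uᶜ
      = z⁻¹ * faSetIntegral μ (fun ω => z ^ brk x ω) Uᶜ :=
    faSetIntegral_eq_mul_of_eqOn (inv_ne_zero hz) fun ω hω => by
      rw [hbrk.eq_sub_one_of_notMem hG hxy hd hω, zpow_sub_one₀ hz, mul_comm]
  rw [← hsplit y, ← hsplit x, hy_on, hx_on, hy_off, pow_succ]
  ring

theorem sum_Icc_zpow_succ {z : ℂ} (hz : z ≠ 0) (a : ℕ → ℂ) (k : ℕ) :
    ∑ j ∈ Finset.Icc 1 (k + 1), z ^ (2 * ((j : ℤ) - (k + 1 : ℕ))) * a j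
      = (z ^ 2)⁻¹ * ∑ j ∈ Finset.Icc 1 k, z ^ (2 * ((j : ℤ) - k)) * a j + a (k + 1) := by
  rw [Finset.sum_Icc_succ_top (by omega), Finset.mul_sum, sub_self, mul_zero, zpow_zero, one_mul]
  congr 1
  refine Finset.sum_congr rfl fun j _ => ?_
  rw [← mul_assoc, ← zpow_ofNat, ← zpow_neg, ← zpow_add₀ hz]
  push_cast
  ring_nf

theorem div_pow_eq_of_recurrence {z : ℂ} (hz : z ≠ 0) {F a : ℕ → ℂ} {m k : ℕ}
    (hrec : ∀ j < k, F (j + 1) = z⁻¹ * F j + (z - z⁻¹) * z ^ (m + j) * a (j + 1)) :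
    F k / z ^ (m + k) = F 0 / z ^ (m + 2 * k)
      + ((z ^ 2 - 1) / z ^ 2) * ∑ j ∈ Finset.Icc 1 k, z ^ (2 * ((j : ℤ) - k)) * a j := by
  induction k with
  | zero => simp
  | succ k ih =>
    have hk := (div_eq_iff (pow_ne_zero _ hz)).mp (ih fun j hj => hrec j (by omega))
    rw [sum_Icc_zpow_succ hz, hrec k (by omega), hk]
    field_simp
    ring

theorem stmt_17_general {V : Type*} (G : SimpleGraph V) (htree : G.IsTree)
    (o : V) (brk : V → Ray G o → ℤ) (hbrk : IsHorocycleBracket G o brk)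
    (z : ℂ) (hz0 : z ≠ 0)
    (μ : Set (Ray G o) → ℂ) (hμ : IsFAMeasure μ)
    (m k : ℕ) (c : ℕ → V)
    (hadj : ∀ j, j < k → G.Adj (c j) (c (j + 1)))
    (hdist : ∀ j, j ≤ k → G.dist o (c j) = m + j) :
    poisson G o brk z μ (c k) / z ^ (m + k)
      = poisson G o brk z μ (c 0) / z ^ (m + 2 * k)
        + ((z ^ 2 - 1) / z ^ 2)
            * ∑ j ∈ Finset.Icc 1 k,
                z ^ (2 * ((j : ℤ) - (k : ℤ))) * μ (raysThrough G o (c j)) := by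
  refine div_pow_eq_of_recurrence (F := fun j => poisson G o brk z μ (c j))
    (a := fun j => μ (raysThrough G o (c j))) hz0 fun j hj => ?_
  have hd := hdist j hj.le
  rw [poisson_of_adj htree hbrk hμ hz0 (hadj j hj) (by rw [hdist (j + 1) hj, hd]; rfl), hd]

/-- Let `μ` be a finitely additive measure on `Ω`, `z ∉ {-1,0,1}`,
`f = P_z(μ)`, and let `x_0, x_1, …, x_k` be a chain pointing away from `o`
with `d(o,x_0) = m`. Then
`f(x_k)/z^{m+k} = f(x_0)/z^{m+2k} + ((z²-1)/z²) Σ_{j=1}^{k} z^{2(j-k)} μ(Ω(x_j))`. -/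
theorem stmt_17 {V : Type*} (G : SimpleGraph V) (htree : G.IsTree) [G.LocallyFinite]
    (o : V) (brk : V → Ray G o → ℤ) (hbrk : IsHorocycleBracket G o brk)
    (z : ℂ) (hz0 : z ≠ 0) (hz1 : z ≠ 1) (hzm1 : z ≠ -1)
    (μ : Set (Ray G o) → ℂ) (hμ : IsFAMeasure μ)
    (m k : ℕ) (c : ℕ → V)
    (hadj : ∀ j, j < k → G.Adj (c j) (c (j + 1)))
    (hdist : ∀ j, j ≤ k → G.dist o (c j) = m + j) :
    poisson G o brk z μ (c k) / z ^ (m + k)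
      = poisson G o brk z μ (c 0) / z ^ (m + 2 * k)
        + ((z ^ 2 - 1) / z ^ 2)
            * ∑ j ∈ Finset.Icc 1 k,
                z ^ (2 * ((j : ℤ) - (k : ℤ))) * μ (raysThrough G o (c j)) :=
  stmt_17_general G htree o brk hbrk z hz0 μ hμ m k c hadj hdist
end

section
/- Let T be the (q+1)-regular tree, z ∉ {−1,0,1} with q < |z|² (in fact q < z² in the sense that |q/z²| < 1), μ a finitely additive measure on Ω, and f = P_z(μ). Then for every vertex x with m = d(o,x) ≥ 1, μ(Ω(x)) = ((z²−q)/(z²−1)) · lim_{k→∞} z^{−(m+k)} Σ_{y ∈ S_k(x)} f(y), where S_k(x) = {y : d(x,y) = k, x ∈ [o,y]}. -/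
open SimpleGraph

variable {V : Type*}

open Filter Topology

/-!
Write `|v| = d(o,v)`, `f = P_z(μ)` and `F k = ∑_{y ∈ S_k(x)} f y`. On `Ω(v)` with `|v| = R ≥ |y|`
the kernel `z^{⟨y,ω⟩}` is the constant `z^{R - d(v,y)}`, so `f y` is a finite sum over the
sphere `|v| = R`. Since a vertex `v ≠ w` has one neighbour closer to `w` and `q` farther away,
`f` is an eigenfunction of the neighbour sum with eigenvalue `z + q/z`. Splitting the neighbours
of each `v ∈ S_k(x)` into its parent and its `q` children then gives the recurrence
`F (k+2) = (z + q/z) F (k+1) - q F k`, whose characteristic roots are `z` and `q/z`. As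
`|q/z| < |z|`, `z^{-k} F k` tends to `(F 1 - (q/z) F 0) / (z - q/z)`, and comparing `f x` with
`f` at the parent of `x` shows `z F 1 - q F 0 = (z² - 1) z^m μ(Ω(x))`.
-/

namespace SimpleGraph

variable {G : SimpleGraph V}

lemma Connected.exists_adj_dist_add_one_eq (hG : G.Connected) {o v : V} (hv : v ≠ o) :
    ∃ u, G.Adj v u ∧ G.dist o u + 1 = G.dist o v := by
  obtain ⟨p, hp⟩ := hG.exists_walk_length_eq_dist v o
  cases p with
  | nil => exact absurd rfl hv
  | @cons _ u _ h p =>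
    refine ⟨u, h, ?_⟩
    have hle := dist_le p
    have htri : G.dist v o ≤ G.dist v u + G.dist u o := hG.dist_triangle
    rw [dist_eq_one_iff_adj.mpr h] at htri
    rw [Walk.length_cons] at hp
    rw [dist_comm (u := o), dist_comm (u := o)]
    omega

lemma IsTree.eq_of_adj_of_dist_add_one_eq (hG : G.IsTree) {o v u₁ u₂ : V}
    (h₁ : G.Adj v u₁) (h₂ : G.Adj v u₂)
    (hd₁ : G.dist o u₁ + 1 = G.dist o v) (hd₂ : G.dist o u₂ + 1 = G.dist o v) : u₁ = u₂ := by
  have geodesic_concat : ∀ {u} (h : G.Adj v u), G.dist o u + 1 = G.dist o v →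
      ∃ p : G.Walk o u, (p.concat h.symm).IsPath := fun {u} h hd => by
    obtain ⟨p, hp⟩ := hG.connected.exists_walk_length_eq_dist o u
    exact ⟨p, Walk.isPath_of_length_eq_dist _ (by rw [Walk.length_concat]; omega)⟩
  obtain ⟨p₁, hp₁⟩ := geodesic_concat h₁ hd₁
  obtain ⟨p₂, hp₂⟩ := geodesic_concat h₂ hd₂
  have := (hG.isAcyclic.subsingleton_path o v).elim ⟨_, hp₁⟩ ⟨_, hp₂⟩
  obtain ⟨rfl, -⟩ := Walk.concat_inj (congrArg Subtype.val this)
  rfl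

/-- By induction on `d(y,w)`: the neighbour `p` of `w ≠ y` towards `y` is not `u`, the only
neighbour of `w` closer to `o`, so `(w, p)` is again a parent–child pair with `y` on the side
of the child. -/
lemma IsTree.dist_eq_add_of_dist_lt (hG : G.IsTree) {o y : V} :
    ∀ {n : ℕ} {u w : V}, G.Adj u w → G.dist o w = G.dist o u + 1 → G.dist y w = n →
      G.dist y w < G.dist y u → G.dist o y = G.dist o w + n := by
  intro n
  induction n with
  | zero =>
    intro u w _ _ hn _
    rw [hG.connected.dist_eq_zero_iff.mp hn]
    rfl
  | succ n ih =>
    intro u w huw hw hn hlt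
    have hwy : w ≠ y := by
      rintro rfl
      simp at hn
    obtain ⟨p, hwp, hp⟩ := hG.connected.exists_adj_dist_add_one_eq hwy
    have hpu : p ≠ u := by
      rintro rfl
      omega
    have hp_child : G.dist o p = G.dist o w + 1 := by
      rcases hG.dist_eq_dist_add_one_of_adj o hwp with h | h
      · exact absurd (hG.eq_of_adj_of_dist_add_one_eq hwp huw.symm h.symm (by omega)) hpu
      · exact h
    rw [ih hwp hp_child (by omega) (by omega), hp_child]
    omega

lemma IsTree.dist_eq_dist_add_one_of_dist_le (hG : G.IsTree) {o u w y : V} (huw : G.Adj u w)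
    (hw : G.dist o w = G.dist o u + 1) (hy : G.dist o y ≤ G.dist o w) (hne : y ≠ w) :
    G.dist y w = G.dist y u + 1 := by
  rcases hG.dist_eq_dist_add_one_of_adj y huw with h | h
  · have hpos : G.dist y w ≠ 0 := fun h0 => hne (hG.connected.dist_eq_zero_iff.mp h0)
    have := hG.dist_eq_add_of_dist_lt (y := y) huw hw rfl (by omega)
    omega
  · exact h

open scoped Classical in
/-- The neighbour of `v` one step closer to `o`; the junk value `v` when there is none. -/
noncomputable def parent (G : SimpleGraph V) (o v : V) : V :=
  if h : ∃ u, G.Adj v u ∧ G.dist o u + 1 = G.dist o v then h.choose else v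

lemma Connected.parent_spec (hG : G.Connected) {o v : V} (hv : v ≠ o) :
    G.Adj v (G.parent o v) ∧ G.dist o (G.parent o v) + 1 = G.dist o v := by
  have h := hG.exists_adj_dist_add_one_eq hv
  rw [parent, dif_pos h]
  exact h.choose_spec

lemma IsTree.parent_eq (hG : G.IsTree) {o v p : V} (h : G.Adj v p)
    (hd : G.dist o p + 1 = G.dist o v) : G.parent o v = p := by
  have hv : v ≠ o := by
    rintro rfl
    simp at hd
  obtain ⟨h₁, hd₁⟩ := hG.connected.parent_spec hv
  exact hG.eq_of_adj_of_dist_add_one_eq h₁ h hd₁ hd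

section LocallyFinite

variable [G.LocallyFinite]

noncomputable def children (G : SimpleGraph V) [G.LocallyFinite] (o v : V) : Finset V :=
  {u ∈ G.neighborFinset v | G.dist o u = G.dist o v + 1}

lemma mem_children {o v u : V} :
    u ∈ G.children o v ↔ G.Adj v u ∧ G.dist o u = G.dist o v + 1 := by
  rw [children, Finset.mem_filter, mem_neighborFinset]

lemma IsTree.parent_eq_of_mem_children (hG : G.IsTree) {o v u : V} (hu : u ∈ G.children o v) :
    G.parent o u = v := by
  obtain ⟨h, hd⟩ := mem_children.mp hu
  exact hG.parent_eq h.symm (by omega)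

lemma IsTree.pairwise_disjoint_children (hG : G.IsTree) (o : V) :
    Pairwise (Function.onFun Disjoint (G.children o)) := fun _ _ hne =>
  Finset.disjoint_left.mpr fun _ hu hu' =>
    hne ((hG.parent_eq_of_mem_children hu).symm.trans (hG.parent_eq_of_mem_children hu'))

lemma IsTree.children_eq_erase_parent [DecidableEq V] (hG : G.IsTree) {o v : V} (hv : v ≠ o) :
    G.children o v = (G.neighborFinset v).erase (G.parent o v) := by
  obtain ⟨hadj, hd⟩ := hG.connected.parent_spec hv
  ext u
  rw [mem_children, Finset.mem_erase, mem_neighborFinset]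
  constructor
  · rintro ⟨h, hu⟩
    exact ⟨by rintro rfl; omega, h⟩
  · rintro ⟨hne, h⟩
    refine ⟨h, ?_⟩
    rcases hG.dist_eq_dist_add_one_of_adj o h with h' | h'
    · exact absurd (hG.parent_eq h h'.symm).symm hne
    · exact h'

lemma IsTree.card_children (hG : G.IsTree) {q : ℕ} (hreg : ∀ v, G.degree v = q + 1) {o v : V}
    (hv : v ≠ o) : (G.children o v).card = q := by
  classical
  rw [hG.children_eq_erase_parent hv, Finset.card_erase_of_mem
    (mem_neighborFinset _ _ _ |>.mpr (hG.connected.parent_spec hv).1),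
    card_neighborFinset_eq_degree, hreg, Nat.add_sub_cancel]

lemma IsTree.sum_children {M : Type*} [AddCommGroup M] (hG : G.IsTree) {o v : V} (hv : v ≠ o)
    (f : V → M) :
    ∑ u ∈ G.children o v, f u = ∑ u ∈ G.neighborFinset v, f u - f (G.parent o v) := by
  classical
  rw [hG.children_eq_erase_parent hv, Finset.sum_erase_eq_sub
    (mem_neighborFinset _ _ _ |>.mpr (hG.connected.parent_spec hv).1)]

open scoped Classical in
/-- `S_k(x)`, generated as the `k`-th generation of descendants of `x` in the tree rooted at `o`. -/
noncomputable def forwardSphere (G : SimpleGraph V) [G.LocallyFinite] (o x : V) : ℕ → Finset V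
  | 0 => {x}
  | k + 1 => (G.forwardSphere o x k).biUnion (G.children o)

lemma IsTree.mem_forwardSphere (hG : G.IsTree) {o x y : V} {k : ℕ} :
    y ∈ G.forwardSphere o x k ↔ G.dist x y = k ∧ G.dist o x + G.dist x y = G.dist o y := by
  classical
  induction k generalizing y with
  | zero =>
    rw [forwardSphere, Finset.mem_singleton, hG.connected.dist_eq_zero_iff]
    constructor
    · rintro rfl
      simp
    · exact fun h => h.1.symm
  | succ k ih =>
    rw [forwardSphere, Finset.mem_biUnion]
    constructor
    · rintro ⟨v, hv, hyv⟩
      obtain ⟨hxv, hov⟩ := ih.mp hv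
      obtain ⟨hvy, hy⟩ := mem_children.mp hyv
      have hxy : x ≠ y := by
        rintro rfl
        omega
      have := hG.dist_eq_dist_add_one_of_dist_le hvy hy (by omega) hxy
      omega
    · rintro ⟨hxy, hoy⟩
      have hyo : y ≠ o := by
        rintro rfl
        rw [dist_self] at hoy
        omega
      obtain ⟨hadj, hd⟩ := hG.connected.parent_spec hyo
      have hxy' : x ≠ y := by
        rintro rfl
        simp at hxy
      have := hG.dist_eq_dist_add_one_of_dist_le hadj.symm hd.symm (by omega) hxy'
      exact ⟨G.parent o y, ih.mpr ⟨by omega, by omega⟩, mem_children.mpr ⟨hadj.symm, hd.symm⟩⟩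

lemma IsTree.coe_forwardSphere (hG : G.IsTree) (o x : V) (k : ℕ) :
    (G.forwardSphere o x k : Set V)
      = {y | G.dist x y = k ∧ G.dist o x + G.dist x y = G.dist o y} := by
  ext y
  exact hG.mem_forwardSphere

lemma IsTree.mem_forwardSphere_self (hG : G.IsTree) {o y : V} {R : ℕ} :
    y ∈ G.forwardSphere o o R ↔ G.dist o y = R := by
  simp [hG.mem_forwardSphere]

lemma IsTree.ne_of_mem_forwardSphere (hG : G.IsTree) {o x y : V} {k : ℕ} (hx : x ≠ o)
    (hy : y ∈ G.forwardSphere o x k) : y ≠ o := by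
  rintro rfl
  have := hG.connected.pos_dist_of_ne hx
  rw [hG.mem_forwardSphere, dist_self] at hy
  omega

end LocallyFinite

end SimpleGraph

namespace IsFAMeasure

variable {Z ι : Type*} [TopologicalSpace Z] {μ : Set Z → ℂ}

lemma measure_biUnion_finset (hμ : IsFAMeasure μ) {s : Finset ι} {A : ι → Set Z}
    (hA : ∀ i ∈ s, IsClopen (A i)) (hd : (s : Set ι).PairwiseDisjoint A) :
    μ (⋃ i ∈ s, A i) = ∑ i ∈ s, μ (A i) := by
  classical
  induction s using Finset.induction_on with
  | empty => simpa using hμ.1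
  | insert a s ha ih =>
    rw [Finset.coe_insert, Set.pairwiseDisjoint_insert] at hd
    have hAs : ∀ i ∈ s, IsClopen (A i) := fun i hi => hA i (Finset.mem_insert_of_mem hi)
    have hdisj : Disjoint (A a) (⋃ i ∈ s, A i) :=
      Set.disjoint_iUnion₂_right.mpr fun i hi => hd.2 i hi fun h => ha (h ▸ hi)
    have hadd := hμ.2 (A a) (⋃ i ∈ s, A i) (hA a (Finset.mem_insert_self a s))
      (isClopen_biUnion_finset hAs)
    rw [hdisj.inter_eq, hμ.1, add_zero] at hadd
    rw [Finset.set_biUnion_insert, Finset.sum_insert ha, hadd, ih hAs hd.1]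

lemma finsum_mul_measure_fiber (hμ : IsFAMeasure μ) {s : Finset ι} {A : ι → Set Z}
    (hA : ∀ i ∈ s, IsClopen (A i)) (hd : (s : Set ι).PairwiseDisjoint A)
    (hcover : ∀ ζ, ∃ i ∈ s, ζ ∈ A i) {φ : Z → ℂ} {g : ι → ℂ}
    (hφ : ∀ i ∈ s, ∀ ζ ∈ A i, φ ζ = g i) :
    ∑ᶠ c, c * μ {ζ | φ ζ = c} = ∑ i ∈ s, g i * μ (A i) := by
  have hfiber : ∀ c, μ {ζ | φ ζ = c} = ∑ i ∈ s with g i = c, μ (A i) := by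
    intro c
    have hset : {ζ | φ ζ = c} = ⋃ i ∈ s.filter (g · = c), A i := by
      ext ζ
      simp only [Set.mem_ofPred_eq, Set.mem_iUnion, Finset.mem_filter, exists_prop]
      constructor
      · rintro rfl
        obtain ⟨i, hi, hζ⟩ := hcover ζ
        exact ⟨i, ⟨hi, (hφ i hi ζ hζ).symm⟩, hζ⟩
      · rintro ⟨i, ⟨hi, rfl⟩, hζ⟩
        exact hφ i hi ζ hζ
    rw [hset, hμ.measure_biUnion_finset (fun i hi => hA i (Finset.mem_filter.mp hi).1)
      (hd.subset (Finset.coe_subset.mpr (Finset.filter_subset _ _)))]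
  have hsupp : (Function.support fun c => c * μ {ζ | φ ζ = c}) ⊆ ↑(s.image g) := by
    intro c hc
    by_contra hcg
    refine hc ?_
    dsimp only
    rw [hfiber, Finset.sum_eq_zero, mul_zero]
    intro i hi
    rw [Finset.mem_filter] at hi
    exact absurd (hi.2 ▸ Finset.mem_image_of_mem g hi.1) hcg
  rw [finsum_eq_sum_of_support_subset _ hsupp,
    ← Finset.sum_fiberwise_of_maps_to (fun i hi => Finset.mem_image_of_mem g hi)]
  refine Finset.sum_congr rfl fun c _ => ?_
  rw [hfiber, Finset.mul_sum]
  refine Finset.sum_congr rfl fun i hi => ?_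
  rw [(Finset.mem_filter.mp hi).2]

end IsFAMeasure

section Boundary

variable {G : SimpleGraph V} {o : V}

lemma apply_dist_eq_of_mem_raysThrough {v : V} {ω : Ray G o} (h : ω ∈ raysThrough G o v) :
    ω.1 (G.dist o v) = v := by
  obtain ⟨n, rfl⟩ := h
  rw [ω.2.2.2 n]

lemma mem_raysThrough_apply (ω : Ray G o) (n : ℕ) : ω ∈ raysThrough G o (ω.1 n) :=
  ⟨n, rfl⟩

lemma disjoint_raysThrough {v v' : V} (hd : G.dist o v = G.dist o v') (hne : v ≠ v') :
    Disjoint (raysThrough G o v) (raysThrough G o v') :=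
  Set.disjoint_left.mpr fun _ h h' =>
    hne ((apply_dist_eq_of_mem_raysThrough h).symm.trans
      (hd ▸ apply_dist_eq_of_mem_raysThrough h'))

lemma isClopen_raysThrough (v : V) : IsClopen (raysThrough G o v) := by
  have hopen : ∀ w, IsOpen (raysThrough G o w) := fun w =>
    TopologicalSpace.GenerateOpen.basic _ ⟨w, rfl⟩
  refine ⟨isOpen_compl_iff.mp (isOpen_iff_forall_mem_open.mpr fun ω hω => ?_), hopen v⟩
  refine ⟨raysThrough G o (ω.1 (G.dist o v)), ?_, hopen _, mem_raysThrough_apply ω _⟩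
  refine (disjoint_raysThrough (ω.2.2.2 _) fun h => hω ?_).subset_compl_right
  exact h ▸ mem_raysThrough_apply ω _

lemma SimpleGraph.IsTree.dist_ray_add (hG : G.IsTree) (ω : Ray G o) {y : V} {R : ℕ}
    (hR : G.dist o y ≤ R) (k : ℕ) : G.dist y (ω.1 (R + k)) = G.dist y (ω.1 R) + k := by
  have hd := ω.2.2.2
  induction k with
  | zero => rfl
  | succ k ih =>
    have hne : y ≠ ω.1 (R + k + 1) := fun h => by
      have := hd (R + k + 1)
      rw [← h] at this
      omega
    rw [← add_assoc, hG.dist_eq_dist_add_one_of_dist_le (ω.2.2.1 _) (by rw [hd, hd])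
      (by rw [hd]; omega) hne, ih, add_assoc]

lemma IsHorocycleBracket.eq_sub_dist_s18 {brk : V → Ray G o → ℤ} (hbrk : IsHorocycleBracket G o brk)
    (hG : G.IsTree) {y : V} {R : ℕ} (hR : G.dist o y ≤ R) (ω : Ray G o) :
    brk y ω = R - G.dist y (ω.1 R) := by
  obtain ⟨N, hN⟩ := hbrk y ω
  rw [hN (R + N) (by omega), hG.dist_ray_add ω hR N]
  push_cast
  ring

end Boundary

namespace SimpleGraph.IsTree

variable {G : SimpleGraph V} [G.LocallyFinite] {o : V}

lemma poisson_eq_sum_sphere (hG : G.IsTree) {brk : V → Ray G o → ℤ}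
    (hbrk : IsHorocycleBracket G o brk) {μ : Set (Ray G o) → ℂ} (hμ : IsFAMeasure μ) (z : ℂ)
    {y : V} {R : ℕ} (hR : G.dist o y ≤ R) :
    poisson G o brk z μ y
      = ∑ v ∈ G.forwardSphere o o R, z ^ ((R : ℤ) - G.dist v y) * μ (raysThrough G o v) :=
  hμ.finsum_mul_measure_fiber (fun v _ => isClopen_raysThrough v)
    (fun v hv v' hv' hne => disjoint_raysThrough
      (by rw [hG.mem_forwardSphere_self.mp hv, hG.mem_forwardSphere_self.mp hv']) hne)
    (fun ω => ⟨ω.1 R, hG.mem_forwardSphere_self.mpr (ω.2.2.2 R), mem_raysThrough_apply ω R⟩)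
    (fun v hv ω hω => by
      have hωR := apply_dist_eq_of_mem_raysThrough hω
      rw [hG.mem_forwardSphere_self.mp hv] at hωR
      rw [hbrk.eq_sub_dist_s18 hG hR, hωR, dist_comm])

lemma sum_neighborFinset_zpow (hG : G.IsTree) {q : ℕ} (hreg : ∀ v, G.degree v = q + 1)
    {z : ℂ} (hz : z ≠ 0) (R : ℤ) {v w : V} (hvw : v ≠ w) :
    ∑ u ∈ G.neighborFinset v, z ^ (R - G.dist w u) = (z + q / z) * z ^ (R - G.dist w v) := by
  obtain ⟨-, hd⟩ := hG.connected.parent_spec hvw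
  have hchild : ∀ u ∈ G.children w v, z ^ (R - G.dist w u) = z ^ (R - G.dist w v) / z := by
    intro u hu
    rw [(mem_children.mp hu).2, Nat.cast_succ, sub_add_eq_sub_sub, zpow_sub_one₀ hz,
      div_eq_mul_inv]
  have hparent : z ^ (R - G.dist w (G.parent w v)) = z * z ^ (R - G.dist w v) := by
    rw [← hd, Nat.cast_succ, ← sub_sub, zpow_sub_one₀ hz]
    field_simp
  rw [← sub_add_cancel (∑ u ∈ G.neighborFinset v, _) (z ^ (R - G.dist w (G.parent w v))),
    ← hG.sum_children hvw, Finset.sum_congr rfl hchild, Finset.sum_const,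
    hG.card_children hreg hvw, nsmul_eq_mul, hparent]
  field_simp
  ring

lemma sum_neighborFinset_poisson (hG : G.IsTree) {q : ℕ} (hreg : ∀ v, G.degree v = q + 1)
    {brk : V → Ray G o → ℤ} (hbrk : IsHorocycleBracket G o brk) {μ : Set (Ray G o) → ℂ}
    (hμ : IsFAMeasure μ) {z : ℂ} (hz : z ≠ 0) (v : V) :
    ∑ u ∈ G.neighborFinset v, poisson G o brk z μ u = (z + q / z) * poisson G o brk z μ v := by
  set R := G.dist o v + 1
  have hR : ∀ u ∈ G.neighborFinset v, G.dist o u ≤ R := fun u hu => by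
    rcases hG.dist_eq_dist_add_one_of_adj o (mem_neighborFinset _ _ _ |>.mp hu) with h | h <;>
      omega
  rw [Finset.sum_congr rfl fun u hu => hG.poisson_eq_sum_sphere hbrk hμ z (hR u hu),
    Finset.sum_comm,
    hG.poisson_eq_sum_sphere hbrk hμ z (Nat.le_succ _), Finset.mul_sum]
  refine Finset.sum_congr rfl fun w hw => ?_
  have hvw : v ≠ w := by
    rintro rfl
    rw [hG.mem_forwardSphere_self] at hw
    omega
  rw [← Finset.sum_mul, hG.sum_neighborFinset_zpow hreg hz R hvw, mul_assoc]

lemma mul_poisson_parent (hG : G.IsTree) {brk : V → Ray G o → ℤ}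
    (hbrk : IsHorocycleBracket G o brk) {μ : Set (Ray G o) → ℂ} (hμ : IsFAMeasure μ) {z : ℂ}
    (hz : z ≠ 0) {x : V} (hx : x ≠ o) :
    z * poisson G o brk z μ (G.parent o x)
      = z ^ 2 * poisson G o brk z μ x
        - (z ^ 2 - 1) * z ^ G.dist o x * μ (raysThrough G o x) := by
  obtain ⟨hadj, hd⟩ := hG.connected.parent_spec hx
  set m := G.dist o x
  set p := G.parent o x
  have hxS : x ∈ G.forwardSphere o o m := hG.mem_forwardSphere_self.mpr rfl
  have hterm : ∀ v ∈ G.forwardSphere o o m, v ≠ x →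
      (z * z ^ ((m : ℤ) - G.dist v p) - z ^ 2 * z ^ ((m : ℤ) - G.dist v x))
        * μ (raysThrough G o v) = 0 := by
    intro v hv hvx
    have hvp := hG.dist_eq_dist_add_one_of_dist_le hadj.symm hd.symm
      (hG.mem_forwardSphere_self.mp hv).le hvx
    rw [hvp, Nat.cast_succ, ← sub_sub, zpow_sub_one₀ hz]
    field_simp
    ring
  have hsum := Finset.sum_eq_single_of_mem x hxS hterm
  simp only [sub_mul, Finset.sum_sub_distrib, mul_assoc, ← Finset.mul_sum] at hsum
  rw [dist_self, dist_eq_one_iff_adj.mpr hadj] at hsum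
  have hp : z * z ^ ((m : ℤ) - (1 : ℕ)) = z ^ m := by
    rw [Nat.cast_one, zpow_sub_one₀ hz, zpow_natCast]
    field_simp
  have hx' : z ^ ((m : ℤ) - (0 : ℕ)) = z ^ m := by simp
  rw [hG.poisson_eq_sum_sphere hbrk hμ z (R := m) (by omega),
    hG.poisson_eq_sum_sphere hbrk hμ z le_rfl]
  linear_combination hsum + μ (raysThrough G o x) * hp - z ^ 2 * μ (raysThrough G o x) * hx'

lemma sum_forwardSphere_succ {M : Type*} [AddCommGroup M] (hG : G.IsTree) {x : V} (hx : x ≠ o)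
    (f : V → M) (k : ℕ) :
    ∑ y ∈ G.forwardSphere o x (k + 1), f y
      = ∑ v ∈ G.forwardSphere o x k, (∑ u ∈ G.neighborFinset v, f u - f (G.parent o v)) := by
  classical
  rw [forwardSphere, Finset.sum_biUnion ((hG.pairwise_disjoint_children o).set_pairwise _)]
  exact Finset.sum_congr rfl fun v hv => hG.sum_children (hG.ne_of_mem_forwardSphere hx hv) f

lemma sum_parent_forwardSphere_succ {M : Type*} [AddCommMonoid M] (hG : G.IsTree) {q : ℕ}
    (hreg : ∀ v, G.degree v = q + 1) {x : V} (hx : x ≠ o) (f : V → M) (k : ℕ) :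
    ∑ v ∈ G.forwardSphere o x (k + 1), f (G.parent o v)
      = q • ∑ v ∈ G.forwardSphere o x k, f v := by
  classical
  rw [forwardSphere, Finset.sum_biUnion ((hG.pairwise_disjoint_children o).set_pairwise _),
    Finset.smul_sum]
  refine Finset.sum_congr rfl fun v hv => ?_
  rw [Finset.sum_congr rfl fun u hu => congrArg f (hG.parent_eq_of_mem_children hu),
    Finset.sum_const, hG.card_children hreg (hG.ne_of_mem_forwardSphere hx hv)]

lemma sum_forwardSphere_add_two (hG : G.IsTree) {q : ℕ} (hreg : ∀ v, G.degree v = q + 1)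
    {x : V} (hx : x ≠ o) {f : V → ℂ} {c : ℂ}
    (hf : ∀ v, ∑ u ∈ G.neighborFinset v, f u = c * f v) (k : ℕ) :
    ∑ y ∈ G.forwardSphere o x (k + 2), f y
      = c * ∑ y ∈ G.forwardSphere o x (k + 1), f y - q * ∑ y ∈ G.forwardSphere o x k, f y := by
  rw [hG.sum_forwardSphere_succ hx f (k + 1), Finset.sum_sub_distrib,
    hG.sum_parent_forwardSphere_succ hreg hx f k, Finset.sum_congr rfl fun v _ => hf v,
    ← Finset.mul_sum, nsmul_eq_mul]

lemma mul_sum_forwardSphere_one_sub (hG : G.IsTree) {q : ℕ} (hreg : ∀ v, G.degree v = q + 1)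
    {brk : V → Ray G o → ℤ} (hbrk : IsHorocycleBracket G o brk) {μ : Set (Ray G o) → ℂ}
    (hμ : IsFAMeasure μ) {z : ℂ} (hz : z ≠ 0) {x : V} (hx : x ≠ o) :
    z * ∑ y ∈ G.forwardSphere o x 1, poisson G o brk z μ y
        - q * ∑ y ∈ G.forwardSphere o x 0, poisson G o brk z μ y
      = (z ^ 2 - 1) * z ^ G.dist o x * μ (raysThrough G o x) := by
  rw [hG.sum_forwardSphere_succ hx _ 0]
  simp only [forwardSphere, Finset.sum_singleton, hG.sum_neighborFinset_poisson hreg hbrk hμ hz]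
  have hparent := hG.mul_poisson_parent hbrk hμ hz hx
  field_simp
  linear_combination -hparent

end SimpleGraph.IsTree

/-- A solution of the recurrence with characteristic roots `a`, `b` is
`F k = L a ^ k + (F 0 - L) b ^ k`; the root `a` of larger modulus dominates. -/
lemma tendsto_div_pow_of_linear_recurrence {𝕜 : Type*} [NormedField 𝕜] {F : ℕ → 𝕜} {a b : 𝕜}
    (hab : ‖b‖ < ‖a‖) (hF : ∀ k, F (k + 2) = (a + b) * F (k + 1) - a * b * F k) :
    Tendsto (fun k => F k / a ^ k) atTop (𝓝 ((F 1 - b * F 0) / (a - b))) := by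
  have ha : a ≠ 0 := norm_pos_iff.mp (lt_of_le_of_lt (norm_nonneg b) hab)
  have hsub : a - b ≠ 0 := fun h => hab.ne (by rw [sub_eq_zero.mp h])
  set L := (F 1 - b * F 0) / (a - b)
  have hL : L * (a - b) = F 1 - b * F 0 := div_mul_cancel₀ _ hsub
  have hclosed : ∀ k, F k = L * a ^ k + (F 0 - L) * b ^ k := by
    intro k
    induction k using Nat.twoStepInduction with
    | zero => ring
    | one => linear_combination -hL
    | more k ih₁ ih₂ => rw [hF k, ih₁, ih₂]; ring
  have hratio : ‖b / a‖ < 1 := by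
    rwa [norm_div, div_lt_one (norm_pos_iff.mpr ha)]
  have hlim := ((tendsto_pow_atTop_nhds_zero_of_norm_lt_one hratio).const_mul (F 0 - L)).const_add L
  rw [mul_zero, add_zero] at hlim
  refine hlim.congr fun k => ?_
  rw [hclosed k, div_pow]
  field_simp

theorem stmt_18_general {V : Type*} (G : SimpleGraph V) (htree : G.IsTree) [G.LocallyFinite]
    (q : ℕ) (hreg : ∀ v : V, G.degree v = q + 1)
    (o : V) (brk : V → Ray G o → ℤ) (hbrk : IsHorocycleBracket G o brk)
    (z : ℂ) (hz0 : z ≠ 0)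
    (hq : ‖(q : ℂ) / z ^ 2‖ < 1)
    (μ : Set (Ray G o) → ℂ) (hμ : IsFAMeasure μ)
    (x : V) (hm : 1 ≤ G.dist o x) :
    Tendsto
      (fun k : ℕ =>
        z ^ (-((G.dist o x : ℤ) + (k : ℤ)))
          * ∑ᶠ y ∈ {y : V | G.dist x y = k ∧ G.dist o x + G.dist x y = G.dist o y},
              poisson G o brk z μ y)
      atTop
      (𝓝 (((z ^ 2 - 1) / (z ^ 2 - (q : ℂ))) * μ (raysThrough G o x))) := by
  set F : ℕ → ℂ := fun k => ∑ y ∈ G.forwardSphere o x k, poisson G o brk z μ y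
  have hxo : x ≠ o := by
    rintro rfl
    simp at hm
  have hroots : ‖(q : ℂ) / z‖ < ‖z‖ := by
    rw [norm_div, norm_pow, div_lt_one (by positivity)] at hq
    rwa [norm_div, div_lt_iff₀ (norm_pos_iff.mpr hz0), ← sq]
  have hrec : ∀ k, F (k + 2) = (z + q / z) * F (k + 1) - z * (q / z) * F k := fun k => by
    rw [mul_div_cancel₀ _ hz0]
    exact htree.sum_forwardSphere_add_two hreg hxo
      (htree.sum_neighborFinset_poisson hreg hbrk hμ hz0) k
  have hF01 := htree.mul_sum_forwardSphere_one_sub hreg hbrk hμ hz0 hxo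
  convert (tendsto_div_pow_of_linear_recurrence hroots hrec).const_mul
    (z ^ (-(G.dist o x : ℤ))) using 2 with k
  · rw [← htree.coe_forwardSphere, finsum_mem_coe_finset, neg_add, zpow_add₀ hz0,
      zpow_neg z (k : ℤ), zpow_natCast, div_eq_mul_inv]
    ring
  · have hsub : z - q / z ≠ 0 := fun h => hroots.ne (congrArg norm (sub_eq_zero.mp h).symm)
    have hzq : z ^ 2 - q ≠ 0 := fun h => hsub (by field_simp; linear_combination h)
    rw [zpow_neg, zpow_natCast]
    field_simp
    linear_combination -hF01

/-- Let `T` be the `(q+1)`-regular tree, `z ∉ {-1,0,1}` with `q < z²` in the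
sense `|q/z²| < 1`, `μ` a finitely additive measure on `Ω`, and `f = P_z(μ)`.
For every vertex `x` with `m = d(o,x) ≥ 1`,
`μ(Ω(x)) = ((z²-q)/(z²-1)) · lim_{k→∞} z^{-(m+k)} Σ_{y ∈ S_k(x)} f(y)`,
where `S_k(x) = {y : d(x,y) = k, x ∈ [o,y]}`. -/
theorem stmt_18 {V : Type*} (G : SimpleGraph V) (htree : G.IsTree) [G.LocallyFinite]
    (q : ℕ) (hreg : ∀ v : V, G.degree v = q + 1)
    (o : V) (brk : V → Ray G o → ℤ) (hbrk : IsHorocycleBracket G o brk)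
    (z : ℂ) (hz0 : z ≠ 0) (hz1 : z ≠ 1) (hzm1 : z ≠ -1)
    (hq : ‖(q : ℂ) / z ^ 2‖ < 1)
    (μ : Set (Ray G o) → ℂ) (hμ : IsFAMeasure μ)
    (x : V) (hm : 1 ≤ G.dist o x) :
    Tendsto
      (fun k : ℕ =>
        z ^ (-((G.dist o x : ℤ) + (k : ℤ)))
          * ∑ᶠ y ∈ {y : V | G.dist x y = k ∧ G.dist o x + G.dist x y = G.dist o y},
              poisson G o brk z μ y)
      atTop
      (𝓝 (((z ^ 2 - 1) / (z ^ 2 - (q : ℂ))) * μ (raysThrough G o x))) :=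
  stmt_18_general G htree q hreg o brk hbrk z hz0 hq μ hμ x hm
end
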